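/- Let J_n be a Markov chain on finite state space X with transition probabilities p_{ij}, and fix a state k with p_{kk} < 1. Let _kJ_n be the chain watched on the reduced space _kX = X \ {k} (i.e., the sequence of states at successive visits to _kX). Then _kJ_n is a Markov chain with transition probabilities _kp_{ij} = p_{ij} + p_{ik} · p_{kj}/(1 - p_{kk}) for i, j ∈ _kX. -/
import Mathlib


open MeasureTheory

/-- Successive times of visits of the path `ω` to the reduced state space `X \ {k}`:
`redV k ω 0 = 0` and `redV k ω (n+1) = min{r > redV k ω n : ω r ≠ k}`. -/
noncomputable def redV {X : Type*} (k : X) (ω : ℕ → X) : ℕ → ℕ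
  | 0 => 0
  | n + 1 => sInf {r | redV k ω n < r ∧ ω r ≠ k}

namespace ReducedAux

open Finset

def tms (e : ℕ → ℕ) (s : ℕ) : ℕ := s + ∑ j ∈ Finset.range s, e j

@[simp] lemma tms_zero (e : ℕ → ℕ) : tms e 0 = 0 := by simp [tms]

lemma tms_succ (e : ℕ → ℕ) (s : ℕ) : tms e (s + 1) = tms e s + e s + 1 := by
  simp [tms, Finset.sum_range_succ]; ring

lemma tms_strictMono (e : ℕ → ℕ) : StrictMono (tms e) :=
  strictMono_nat_of_lt_succ (fun s => by rw [tms_succ]; omega)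

open Classical in
noncomputable def gpath {X : Type*} (k : X) (f : ℕ → X) (n : ℕ) (e : ℕ → ℕ) (r : ℕ) : X :=
  if h : ∃ s, s ≤ n ∧ tms e s = r then f (Classical.choose h) else k

lemma gpath_tms {X : Type*} (k : X) (f : ℕ → X) (n : ℕ) (e : ℕ → ℕ) {s : ℕ} (hs : s ≤ n) :
    gpath k f n e (tms e s) = f s := by
  have h : ∃ s', s' ≤ n ∧ tms e s' = tms e s := ⟨s, hs, rfl⟩
  rw [gpath, dif_pos h]
  have hspec := Classical.choose_spec h
  have : Classical.choose h = s := (tms_strictMono e).injective hspec.2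
  rw [this]

lemma gpath_k {X : Type*} (k : X) (f : ℕ → X) (n : ℕ) (e : ℕ → ℕ) {r : ℕ}
    (hr : ∀ s ≤ n, tms e s ≠ r) : gpath k f n e r = k := by
  rw [gpath, dif_neg]
  rintro ⟨s, hs, h⟩
  exact hr s hs h

def wgt {X : Type*} (p : X → X → ℝ) (k : X) (a b : X) : ℕ → ℝ
  | 0 => p a b
  | m + 1 => p a k * (p k k) ^ m * p k b

lemma wgt_nonneg {X : Type*} {p : X → X → ℝ} (hp : ∀ a b, 0 ≤ p a b) (k a b : X) (m : ℕ) :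
    0 ≤ wgt p k a b m := by
  cases m with
  | zero => exact hp a b
  | succ m => exact mul_nonneg (mul_nonneg (hp a k) (pow_nonneg (hp k k) m)) (hp k b)

lemma prod_block {X : Type*} (p : X → X → ℝ) (k : X) (f : ℕ → X) (n : ℕ) (e : ℕ → ℕ)
    {a : ℕ} (ha : a ≤ n) :
    ∏ r ∈ Finset.range (tms e a), p (gpath k f n e r) (gpath k f n e (r + 1)) =
      ∏ s ∈ Finset.range a, wgt p k (f s) (f (s + 1)) (e s) := by
  induction a with
  | zero => simp
  | succ a ih =>
    have ha' : a ≤ n := Nat.le_of_succ_le ha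
    have hblock : ∀ i, 0 < i → i < e a + 1 → gpath k f n e (tms e a + i) = k := by
      intro i hi0 hi1
      apply gpath_k
      intro s hs heq
      rcases le_or_gt s a with h | h
      · have := (tms_strictMono e).monotone h
        omega
      · have := (tms_strictMono e).monotone (Nat.succ_le_of_lt h)
        rw [tms_succ] at this
        omega
    have hend : tms e a + (e a + 1) = tms e (a + 1) := by rw [tms_succ]; ring
    rw [show tms e (a+1) = tms e a + (e a + 1) from hend.symm, Finset.prod_range_add, ih ha',
      Finset.prod_range_succ _ a]
    congr 1
    -- ∏ i in range (e a + 1), p (gpath (tms e a + i)) (gpath (tms e a + i + 1)) = wgt ... (e a)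
    rcases Nat.eq_zero_or_pos (e a) with h0 | hpos
    · rw [h0]
      simp only [zero_add, Finset.prod_range_one, add_zero]
      rw [gpath_tms k f n e ha']
      have : tms e a + 0 + 1 = tms e (a + 1) := by rw [tms_succ]; omega
      rw [show tms e a + 0 + 1 = tms e (a+1) by omega, gpath_tms k f n e ha]
      rfl
    · obtain ⟨m, hm⟩ := Nat.exists_eq_add_of_lt hpos
      rw [show e a = m + 1 by omega]
      rw [Finset.prod_range_succ, Finset.prod_range_succ']
      have h1 : ∀ i < m, p (gpath k f n e (tms e a + (i+1))) (gpath k f n e (tms e a + (i+1) + 1)) = p k k := by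
        intro i hi
        rw [hblock (i+1) (by omega) (by omega), show tms e a + (i+1) + 1 = tms e a + (i+2) by omega,
          hblock (i+2) (by omega) (by omega)]
      rw [Finset.prod_congr rfl (fun i hi => h1 i (Finset.mem_range.mp hi))]
      rw [Finset.prod_const, Finset.card_range]
      rw [show tms e a + 0 = tms e a by omega, gpath_tms k f n e ha',
        show tms e a + 0 + 1 = tms e a + 1 by omega, hblock 1 (by omega) (by omega)]
      rw [show tms e a + (m+1) + 1 = tms e (a+1) by rw [tms_succ]; omega,
        hblock (m+1) (by omega) (by omega), gpath_tms k f n e ha]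
      show p k k ^ m * p (f a) k * p k (f (a+1)) = wgt p k (f a) (f (a+1)) (m+1)
      show _ = p (f a) k * (p k k) ^ m * p k (f (a+1))
      ring

lemma redV_eq {X : Type*} (k : X) (f : ℕ → X) (n : ℕ) (e : ℕ → ℕ)
    (hf : ∀ s ≤ n, f s ≠ k) (ω : ℕ → X)
    (hω : ∀ r ≤ tms e n, ω r = gpath k f n e r) :
    ∀ s, s ≤ n → redV k ω s = tms e s := by
  intro s
  induction s with
  | zero => intro _; simp [redV]
  | succ s ih =>
    intro hs
    have hs' : s ≤ n := Nat.le_of_succ_le hs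
    have hv : redV k ω (s + 1) = sInf {r | redV k ω s < r ∧ ω r ≠ k} := rfl
    rw [hv, ih hs']
    have hmem : tms e (s + 1) ∈ {r | tms e s < r ∧ ω r ≠ k} := by
      refine ⟨tms_strictMono e (Nat.lt_succ_self s), ?_⟩
      rw [hω _ ((tms_strictMono e).monotone hs), gpath_tms k f n e hs]
      exact hf (s + 1) hs
    refine le_antisymm (Nat.sInf_le hmem) (le_csInf ⟨_, hmem⟩ ?_)
    intro r hr
    by_contra hlt
    push_neg at hlt
    have hrn : r ≤ tms e n := le_trans (le_of_lt hlt) ((tms_strictMono e).monotone hs)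
    apply hr.2
    rw [hω r hrn]
    apply gpath_k
    intro s' hs'' heq
    have h1 := hr.1
    rcases le_or_gt s' s with h | h
    · have := (tms_strictMono e).monotone h
      omega
    · have h2 := (tms_strictMono e).monotone (Nat.succ_le_of_lt h)
      simp only [Nat.succ_eq_add_one] at h2
      omega

end ReducedAux

namespace ReducedAux2

open MeasureTheory ENNReal

lemma tsum_prod_pi (n : ℕ) (W : Fin n → ℕ → ℝ≥0∞) :
    ∑' d : Fin n → ℕ, ∏ s, W s (d s) = ∏ s, ∑' m, W s m := by
  induction n with
  | zero =>
    rw [tsum_eq_single (fun i => i.elim0)]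
    · simp
    · intro b hb
      exact absurd (funext fun i => i.elim0) hb
  | succ n ih =>
    rw [← (Fin.consEquiv fun _ : Fin (n + 1) => ℕ).tsum_eq, ENNReal.tsum_prod']
    simp only [Fin.consEquiv_apply]
    have : ∀ (a : ℕ) (b : Fin n → ℕ),
        (∏ s : Fin (n+1), W s (Fin.cons (α := fun _ => ℕ) a b s)) = W 0 a * ∏ s : Fin n, W s.succ (b s) := by
      intro a b
      rw [Fin.prod_univ_succ]
      simp
    simp only [this]
    rw [Fin.prod_univ_succ]
    calc ∑' (a : ℕ), ∑' (b : Fin n → ℕ), W 0 a * ∏ s : Fin n, W s.succ (b s)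
        = ∑' (a : ℕ), W 0 a * ∑' (b : Fin n → ℕ), ∏ s : Fin n, W s.succ (b s) := by
          congr 1; ext a; rw [ENNReal.tsum_mul_left]
      _ = (∑' (a : ℕ), W 0 a) * ∑' (b : Fin n → ℕ), ∏ s : Fin n, W s.succ (b s) := by
          rw [ENNReal.tsum_mul_right]
      _ = (∑' (a : ℕ), W 0 a) * ∏ s : Fin n, ∑' m, W s.succ m := by rw [ih]

lemma tsum_wgt {X : Type*} (p : X → X → ℝ) (hp : ∀ a b, 0 ≤ p a b) (k a b : X)
    (hpkk : p k k < 1)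
    (wgt : X → X → ℕ → ℝ)
    (hw0 : wgt a b 0 = p a b) (hwS : ∀ m, wgt a b (m + 1) = p a k * (p k k) ^ m * p k b) :
    ∑' m : ℕ, ENNReal.ofReal (wgt a b m) =
      ENNReal.ofReal (p a b + p a k * p k b / (1 - p k k)) := by
  rw [tsum_eq_zero_add' ENNReal.summable]
  simp only [hw0, hwS]
  have h1 : ∀ m : ℕ, ENNReal.ofReal (p a k * p k k ^ m * p k b) =
      ENNReal.ofReal (p a k * p k b) * ENNReal.ofReal (p k k) ^ m := by
    intro m
    rw [← ENNReal.ofReal_pow (hp k k), ← ENNReal.ofReal_mul (mul_nonneg (hp a k) (hp k b))]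
    congr 1; ring
  simp only [h1]
  rw [ENNReal.tsum_mul_left, ENNReal.tsum_geometric]
  have hsub : (1 : ℝ≥0∞) - ENNReal.ofReal (p k k) = ENNReal.ofReal (1 - p k k) := by
    rw [ENNReal.ofReal_sub _ (hp k k), ENNReal.ofReal_one]
  rw [hsub, ← ENNReal.ofReal_inv_of_pos (by linarith), ← ENNReal.ofReal_mul
    (mul_nonneg (hp a k) (hp k b)), ← ENNReal.ofReal_add (hp a b)
    (mul_nonneg (mul_nonneg (hp a k) (hp k b)) (inv_nonneg.mpr (by linarith)))]
  rw [div_eq_mul_inv]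

end ReducedAux2

namespace ReducedAux3

open MeasureTheory ENNReal Finset

variable {m : ℕ}

lemma cylMeasurable (t : ℕ) (g : ℕ → Fin (m + 1)) :
    MeasurableSet {ω : ℕ → Fin (m + 1) | ∀ r ≤ t, ω r = g r} := by
  have : {ω : ℕ → Fin (m + 1) | ∀ r ≤ t, ω r = g r} =
      ⋂ r ∈ Set.Iic t, (fun ω : ℕ → Fin (m + 1) => ω r) ⁻¹' {g r} := by
    ext ω; simp [Set.mem_iInter₂, Set.mem_Iic]
  rw [this]
  exact MeasurableSet.biInter (Set.to_countable _)
    (fun r _ => (measurable_pi_apply r) (measurableSet_singleton _))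

def extk (k : Fin (m + 1)) (t : ℕ) (h : Fin (t + 1) → Fin (m + 1)) (r : ℕ) : Fin (m + 1) :=
  if hr : r < t + 1 then h ⟨r, hr⟩ else k

lemma sum_cyl (ν : Measure (ℕ → Fin (m + 1))) [IsProbabilityMeasure ν]
    (k : Fin (m + 1)) (t : ℕ) :
    ∑ h : Fin (t + 1) → Fin (m + 1), ν {ω | ∀ r ≤ t, ω r = extk k t h r} = 1 := by
  have hU : (⋃ h : Fin (t + 1) → Fin (m + 1), {ω : ℕ → Fin (m+1) | ∀ r ≤ t, ω r = extk k t h r})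
      = Set.univ := by
    ext ω
    simp only [Set.mem_iUnion, Set.mem_univ, iff_true]
    refine ⟨fun j => ω j, fun r hr => ?_⟩
    rw [extk, dif_pos (Nat.lt_succ_of_le hr)]
  have hdisj : Pairwise (Function.onFun Disjoint
      fun h : Fin (t + 1) → Fin (m + 1) => {ω : ℕ → Fin (m+1) | ∀ r ≤ t, ω r = extk k t h r}) := by
    intro h h' hne
    rw [Function.onFun, Set.disjoint_left]
    intro ω hω hω'
    apply hne
    funext j
    have e1 := hω j (Nat.lt_succ_iff.mp j.isLt)
    have e2 := hω' j (Nat.lt_succ_iff.mp j.isLt)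
    rw [extk, dif_pos j.isLt] at e1
    rw [extk, dif_pos j.isLt] at e2
    simp only [Fin.eta] at e1 e2
    exact e1.symm.trans e2
  calc ∑ h : Fin (t + 1) → Fin (m + 1), ν {ω | ∀ r ≤ t, ω r = extk k t h r}
      = ∑' h : Fin (t + 1) → Fin (m + 1), ν {ω | ∀ r ≤ t, ω r = extk k t h r} :=
        (tsum_fintype _).symm
    _ = ν (⋃ h : Fin (t + 1) → Fin (m + 1), {ω | ∀ r ≤ t, ω r = extk k t h r}) :=
        (measure_iUnion hdisj fun h => cylMeasurable t (extk k t h)).symm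
    _ = 1 := by rw [hU, measure_univ]

lemma Tnull (p : Fin (m + 1) → Fin (m + 1) → ℝ)
    (hp : ∀ i j, 0 ≤ p i j) (hple : ∀ i j, p i j ≤ 1)
    (ν : Measure (ℕ → Fin (m + 1))) [IsProbabilityMeasure ν] (i : Fin (m + 1))
    (hMeas : ∀ (t : ℕ) (g : ℕ → Fin (m + 1)),
      ν {ω | ∀ r ≤ t, ω r = g r} =
        ENNReal.ofReal (if g 0 = i then ∏ r ∈ Finset.range t, p (g r) (g (r + 1)) else 0))
    (k : Fin (m + 1)) (hpkk : p k k < 1) (N : ℕ) :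
    ν {ω | ∀ r, N < r → ω r = k} = 0 := by
  have key : ∀ M : ℕ, ν {ω | ∀ r, N < r → ω r = k} ≤ ENNReal.ofReal ((p k k) ^ M) := by
    intro M
    have hsub : {ω : ℕ → Fin (m+1) | ∀ r, N < r → ω r = k} ⊆
        ⋃ h : Fin (N + 1) → Fin (m + 1),
          {ω | ∀ r ≤ N + (M + 1), ω r = extk k N h r} := by
      intro ω hω
      refine Set.mem_iUnion.mpr ⟨fun j => ω j, fun r hr => ?_⟩
      by_cases hrN : r < N + 1
      · rw [extk, dif_pos hrN]
      · rw [extk, dif_neg hrN]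
        exact hω r (by omega)
    have hdisj : Pairwise (Function.onFun Disjoint
        fun h : Fin (N + 1) → Fin (m + 1) =>
          {ω : ℕ → Fin (m+1) | ∀ r ≤ N + (M + 1), ω r = extk k N h r}) := by
      intro h h' hne
      rw [Function.onFun, Set.disjoint_left]
      intro ω hω hω'
      apply hne
      funext j
      have hj : (j : ℕ) ≤ N + (M + 1) := by have := Nat.lt_succ_iff.mp j.isLt; omega
      have e1 := hω j hj
      have e2 := hω' j hj
      rw [extk, dif_pos j.isLt] at e1
      rw [extk, dif_pos j.isLt] at e2
      simp only [Fin.eta] at e1 e2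
      exact e1.symm.trans e2
    refine le_trans (measure_mono hsub) ?_
    rw [measure_iUnion hdisj (fun h => cylMeasurable _ _), tsum_fintype]
    have hbound : ∀ h : Fin (N + 1) → Fin (m + 1),
        ν {ω | ∀ r ≤ N + (M + 1), ω r = extk k N h r} ≤
          ν {ω | ∀ r ≤ N, ω r = extk k N h r} * ENNReal.ofReal ((p k k) ^ M) := by
      intro h
      have hnn : (0:ℝ) ≤ (if extk k N h 0 = i then
          ∏ r ∈ Finset.range N, p (extk k N h r) (extk k N h (r + 1)) else 0) := by
        split_ifs
        · exact Finset.prod_nonneg fun r _ => hp _ _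
        · exact le_refl 0
      have hreal : (if extk k N h 0 = i then
            ∏ r ∈ Finset.range (N + (M + 1)), p (extk k N h r) (extk k N h (r + 1)) else 0) ≤
          (if extk k N h 0 = i then
            ∏ r ∈ Finset.range N, p (extk k N h r) (extk k N h (r + 1)) else 0) * (p k k) ^ M := by
        split_ifs with h0
        · rw [Finset.prod_range_add]
          apply mul_le_mul_of_nonneg_left ?_ (Finset.prod_nonneg fun r _ => hp _ _)
          rw [Finset.prod_range_succ']
          have hq : ∀ i' ∈ Finset.range M,
              p (extk k N h (N + (i' + 1))) (extk k N h (N + (i' + 1) + 1)) = p k k := by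
            intro i' _
            rw [extk, dif_neg (by omega), extk, dif_neg (by omega)]
          rw [Finset.prod_congr rfl hq, Finset.prod_const, Finset.card_range]
          exact mul_le_of_le_one_right (pow_nonneg (hp k k) M) (hple _ _)
        · rw [zero_mul]
      rw [hMeas, hMeas]
      calc ENNReal.ofReal _ ≤ ENNReal.ofReal ((if extk k N h 0 = i then
              ∏ r ∈ Finset.range N, p (extk k N h r) (extk k N h (r + 1)) else 0) * (p k k) ^ M) :=
            ENNReal.ofReal_le_ofReal hreal
        _ = _ := ENNReal.ofReal_mul hnn
    calc ∑ h : Fin (N + 1) → Fin (m + 1), ν {ω | ∀ r ≤ N + (M + 1), ω r = extk k N h r}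
        ≤ ∑ h : Fin (N + 1) → Fin (m + 1),
            ν {ω | ∀ r ≤ N, ω r = extk k N h r} * ENNReal.ofReal ((p k k) ^ M) :=
          Finset.sum_le_sum fun h _ => hbound h
      _ = (∑ h : Fin (N + 1) → Fin (m + 1), ν {ω | ∀ r ≤ N, ω r = extk k N h r}) *
            ENNReal.ofReal ((p k k) ^ M) := by rw [Finset.sum_mul]
      _ = ENNReal.ofReal ((p k k) ^ M) := by rw [sum_cyl ν k N, one_mul]
  have hlim : Filter.Tendsto (fun M => ENNReal.ofReal ((p k k) ^ M)) Filter.atTop (nhds 0) := by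
    have h0 := tendsto_pow_atTop_nhds_zero_of_lt_one (hp k k) hpkk
    have := ENNReal.tendsto_ofReal h0
    simpa using this
  exact le_zero_iff.mp (ge_of_tendsto' hlim key)

lemma Gnull (p : Fin (m + 1) → Fin (m + 1) → ℝ)
    (hp : ∀ i j, 0 ≤ p i j) (hple : ∀ i j, p i j ≤ 1)
    (ν : Measure (ℕ → Fin (m + 1))) [IsProbabilityMeasure ν] (i : Fin (m + 1))
    (hMeas : ∀ (t : ℕ) (g : ℕ → Fin (m + 1)),
      ν {ω | ∀ r ≤ t, ω r = g r} =
        ENNReal.ofReal (if g 0 = i then ∏ r ∈ Finset.range t, p (g r) (g (r + 1)) else 0))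
    (k : Fin (m + 1)) (hpkk : p k k < 1) :
    ν {ω | ¬ ∀ N : ℕ, ∃ r, N < r ∧ ω r ≠ k} = 0 := by
  have hsub : {ω : ℕ → Fin (m+1) | ¬ ∀ N : ℕ, ∃ r, N < r ∧ ω r ≠ k} ⊆
      ⋃ N : ℕ, {ω | ∀ r, N < r → ω r = k} := by
    intro ω hω
    push_neg at hω
    obtain ⟨N, hN⟩ := hω
    exact Set.mem_iUnion.mpr ⟨N, fun r hr => hN r hr⟩
  exact measure_mono_null hsub
    (measure_iUnion_null fun N => Tnull p hp hple ν i hMeas k hpkk N)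

end ReducedAux3


open ReducedAux ReducedAux2 ReducedAux3

/-- If `J_n` is a Markov chain on a finite state space with transition
probabilities `p` and `p k k < 1`, then the chain `ₖJ_n = J_{ₖV_n}` watched at the
successive visits to `X \ {k}` is again a Markov chain, with transition probabilities
`ₖp_{ij} = p_{ij} + p_{ik} p_{kj} / (1 - p_{kk})` for `i, j ∈ X \ {k}`. This is expressed
through the cylinder-set formula for the reduced process. -/
theorem reduced_chain_is_markov {m : ℕ}
    (p : Fin (m + 1) → Fin (m + 1) → ℝ)
    (hp : ∀ i j, 0 ≤ p i j) (hrow : ∀ i, ∑ j, p i j = 1)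
    (μ : Fin (m + 1) → Measure (ℕ → Fin (m + 1)))
    (hprob : ∀ i, IsProbabilityMeasure (μ i))
    (hcyl : ∀ (i : Fin (m + 1)) (n : ℕ) (f : ℕ → Fin (m + 1)),
      (μ i {ω | ∀ k ≤ n, ω k = f k}).toReal =
        if f 0 = i then ∏ k ∈ Finset.range n, p (f k) (f (k + 1)) else 0)
    (k : Fin (m + 1)) (hpkk : p k k < 1) :
    ∀ (i : Fin (m + 1)), i ≠ k → ∀ (n : ℕ) (f : ℕ → Fin (m + 1)),
      (∀ s ≤ n, f s ≠ k) →
      (μ i {ω | ∀ s ≤ n, ω (redV k ω s) = f s}).toReal =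
        if f 0 = i then
          ∏ s ∈ Finset.range n,
            (p (f s) (f (s + 1)) + p (f s) k * p k (f (s + 1)) / (1 - p k k))
        else 0 := by
  intro i hik n f hf
  classical
  haveI := hprob i
  have hple : ∀ a b, p a b ≤ 1 := by
    intro a b
    calc p a b ≤ ∑ j, p a j := Finset.single_le_sum (fun j _ => hp a j) (Finset.mem_univ b)
      _ = 1 := hrow a
  have hMeas : ∀ (t : ℕ) (g : ℕ → Fin (m + 1)),
      μ i {ω | ∀ r ≤ t, ω r = g r} =
        ENNReal.ofReal (if g 0 = i then ∏ r ∈ Finset.range t, p (g r) (g (r + 1)) else 0) := by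
    intro t g
    rw [← hcyl i t g, ENNReal.ofReal_toReal (measure_ne_top _ _)]
  set dEx : (Fin n → ℕ) → ℕ → ℕ := fun d j => if hj : j < n then d ⟨j, hj⟩ else 0 with hdEx
  have hdExval : ∀ (d : Fin n → ℕ) (j : Fin n), dEx d (j : ℕ) = d j := by
    intro d j
    simp only [hdEx, dif_pos j.isLt, Fin.eta]
  set C : (Fin n → ℕ) → Set (ℕ → Fin (m + 1)) := fun d =>
    {ω | ∀ r ≤ tms (dEx d) n, ω r = gpath k f n (dEx d) r} with hC
  set E : Set (ℕ → Fin (m + 1)) := {ω | ∀ s ≤ n, ω (redV k ω s) = f s} with hE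
  -- C d ⊆ E and the value of redV on C d
  have hredC : ∀ (d : Fin n → ℕ) (ω : ℕ → Fin (m + 1)), ω ∈ C d →
      ∀ s, s ≤ n → redV k ω s = tms (dEx d) s := by
    intro d ω hω
    exact redV_eq k f n (dEx d) hf ω hω
  have hCsub : ∀ d, C d ⊆ E := by
    intro d ω hω s hs
    rw [hredC d ω hω s hs, hω _ ((tms_strictMono (dEx d)).monotone hs),
      gpath_tms k f n (dEx d) hs]
  -- pairwise disjointness
  have hdisj : Pairwise (Function.onFun Disjoint C) := by
    intro d d' hne
    rw [Function.onFun, Set.disjoint_left]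
    intro ω hω hω'
    apply hne
    funext j
    have h1 := hredC d ω hω
    have h2 := hredC d' ω hω'
    have e1 : tms (dEx d) (j : ℕ) = tms (dEx d') (j : ℕ) := by
      rw [← h1 _ (le_of_lt j.isLt), ← h2 _ (le_of_lt j.isLt)]
    have e2 : tms (dEx d) ((j : ℕ) + 1) = tms (dEx d') ((j : ℕ) + 1) := by
      rw [← h1 _ j.isLt, ← h2 _ j.isLt]
    rw [tms_succ, tms_succ] at e2
    have := hdExval d j
    have := hdExval d' j
    omega
  -- E ∩ G ⊆ ⋃ C d
  have hEsub : E ⊆ (⋃ d : Fin n → ℕ, C d) ∪ {ω | ¬ ∀ N : ℕ, ∃ r, N < r ∧ ω r ≠ k} := by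
    intro ω hωE
    by_cases hG : ∀ N : ℕ, ∃ r, N < r ∧ ω r ≠ k
    · left
      set v : ℕ → ℕ := redV k ω with hv
      have hv0 : v 0 = 0 := rfl
      have key : ∀ s : ℕ, v s < v (s + 1) ∧ ω (v (s + 1)) ≠ k ∧
          ∀ r, v s < r → r < v (s + 1) → ω r = k := by
        intro s
        have hne : {r | v s < r ∧ ω r ≠ k}.Nonempty := by
          obtain ⟨r, hr1, hr2⟩ := hG (v s)
          exact ⟨r, hr1, hr2⟩
        have hdef : v (s + 1) = sInf {r | v s < r ∧ ω r ≠ k} := rfl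
        have hmem := Nat.sInf_mem hne
        rw [← hdef] at hmem
        refine ⟨hmem.1, hmem.2, ?_⟩
        intro r h1 h2
        by_contra hk
        have : r ∈ {r | v s < r ∧ ω r ≠ k} := ⟨h1, hk⟩
        have := Nat.sInf_le this
        rw [← hdef] at this
        omega
      set d : Fin n → ℕ := fun s => v ((s : ℕ) + 1) - v (s : ℕ) - 1 with hd
      have htms : ∀ s, s ≤ n → tms (dEx d) s = v s := by
        intro s
        induction s with
        | zero => intro _; simp [hv0]
        | succ s ih =>
          intro hs
          have hs' : s ≤ n := Nat.le_of_succ_le hs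
          rw [tms_succ, ih hs']
          have hde : dEx d s = v (s + 1) - v s - 1 := by
            have : dEx d ((⟨s, hs⟩ : Fin n) : ℕ) = d ⟨s, hs⟩ := hdExval d ⟨s, hs⟩
            simpa [hd] using this
          have := (key s).1
          omega
      refine Set.mem_iUnion.mpr ⟨d, ?_⟩
      intro r hr
      rw [htms n le_rfl] at hr
      by_cases hex : ∃ s, s ≤ n ∧ tms (dEx d) s = r
      · obtain ⟨s, hs, hts⟩ := hex
        rw [← hts, gpath_tms k f n (dEx d) hs, hts]
        have : v s = r := by rw [← htms s hs]; exact hts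
        rw [← this]
        exact hωE s hs
      · rw [gpath_k k f n (dEx d) (fun s hs h => hex ⟨s, hs, h⟩)]
        push_neg at hex
        have hvne : ∀ s, s ≤ n → v s ≠ r := by
          intro s hs
          rw [← htms s hs]
          exact hex s hs
        have hr0 : 0 < r := by
          have := hvne 0 (Nat.zero_le n)
          omega
        set s := Nat.findGreatest (fun j => v j < r) n with hsdef
        have h00 : v 0 < r := by omega
        have hPs : v s < r := by
          have := Nat.findGreatest_spec (P := fun j => v j < r) (Nat.zero_le n) h00
          rwa [← hsdef] at this
        have hsn : s ≤ n := Nat.findGreatest_le n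
        have hslt : s < n := by
          rcases Nat.lt_or_ge s n with h | h
          · exact h
          · exfalso
            have hseq : s = n := le_antisymm hsn h
            have := hvne n le_rfl
            rw [hseq] at hPs
            omega
        have hnotP : ¬ (v (s + 1) < r) := by
          apply Nat.findGreatest_is_greatest (P := fun j => v j < r) (n := n) ?_ hslt
          rw [← hsdef]
          exact Nat.lt_succ_self s
        have hlt : r < v (s + 1) := by
          have := hvne (s + 1) hslt
          omega
        exact (key s).2.2 r hPs hlt
    · right
      exact hG
  -- measure of each C d
  have hCmeas : ∀ d : Fin n → ℕ, μ i (C d) =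
      ENNReal.ofReal (if f 0 = i then
        ∏ s ∈ Finset.range n, wgt p k (f s) (f (s + 1)) (dEx d s) else 0) := by
    intro d
    rw [hC]
    rw [hMeas]
    congr 1
    have hg0 : gpath k f n (dEx d) 0 = f 0 := by
      have := gpath_tms k f n (dEx d) (Nat.zero_le n)
      rwa [tms_zero] at this
    rw [hg0, prod_block p k f n (dEx d) le_rfl]
  -- μ i E = ∑' d, μ i (C d)
  have hμE : μ i E = ∑' d : Fin n → ℕ, μ i (C d) := by
    rw [← measure_iUnion hdisj (fun d => cylMeasurable _ _)]
    apply le_antisymm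
    · calc μ i E ≤ μ i ((⋃ d : Fin n → ℕ, C d) ∪ {ω | ¬ ∀ N : ℕ, ∃ r, N < r ∧ ω r ≠ k}) :=
            measure_mono hEsub
        _ ≤ μ i (⋃ d : Fin n → ℕ, C d) + μ i {ω | ¬ ∀ N : ℕ, ∃ r, N < r ∧ ω r ≠ k} :=
            measure_union_le _ _
        _ = μ i (⋃ d : Fin n → ℕ, C d) := by
            rw [Gnull p hp hple (μ i) i hMeas k hpkk, add_zero]
    · exact measure_mono (Set.iUnion_subset hCsub)
  by_cases hf0 : f 0 = i
  · rw [if_pos hf0]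
    have hWnn : ∀ (s : ℕ), 0 ≤ p (f s) (f (s + 1)) + p (f s) k * p k (f (s + 1)) / (1 - p k k) := by
      intro s
      have h1 : (0:ℝ) < 1 - p k k := by linarith
      have h2 : 0 ≤ p (f s) k * p k (f (s + 1)) / (1 - p k k) :=
        div_nonneg (mul_nonneg (hp _ _) (hp _ _)) (le_of_lt h1)
      have h3 := hp (f s) (f (s + 1))
      linarith
    have htsum : (∑' d : Fin n → ℕ, μ i (C d)) =
        ENNReal.ofReal (∏ s ∈ Finset.range n,
          (p (f s) (f (s + 1)) + p (f s) k * p k (f (s + 1)) / (1 - p k k))) := by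
      have hCval : ∀ d : Fin n → ℕ, μ i (C d) =
          ∏ s : Fin n, ENNReal.ofReal (wgt p k (f (s : ℕ)) (f ((s : ℕ) + 1)) (d s)) := by
        intro d
        rw [hCmeas d, if_pos hf0,
          ENNReal.ofReal_prod_of_nonneg (fun s _ => wgt_nonneg hp k (f s) (f (s + 1)) (dEx d s)),
          ← Fin.prod_univ_eq_prod_range
            (fun s => ENNReal.ofReal (wgt p k (f s) (f (s + 1)) (dEx d s))) n]
        exact Finset.prod_congr rfl (fun s _ => by rw [hdExval d s])
      rw [tsum_congr hCval,
        tsum_prod_pi n (fun s m => ENNReal.ofReal (wgt p k (f (s : ℕ)) (f ((s : ℕ) + 1)) m))]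
      have hfac : ∀ s : Fin n,
          (∑' m : ℕ, ENNReal.ofReal (wgt p k (f (s : ℕ)) (f ((s : ℕ) + 1)) m)) =
            ENNReal.ofReal (p (f (s : ℕ)) (f ((s : ℕ) + 1)) +
              p (f (s : ℕ)) k * p k (f ((s : ℕ) + 1)) / (1 - p k k)) := by
        intro s
        exact tsum_wgt p hp k (f (s : ℕ)) (f ((s : ℕ) + 1)) hpkk
          (fun a b m => wgt p k a b m) rfl (fun m => rfl)
      rw [Finset.prod_congr rfl (fun s _ => hfac s),
        ← Fin.prod_univ_eq_prod_range
          (fun s => p (f s) (f (s + 1)) + p (f s) k * p k (f (s + 1)) / (1 - p k k)) n,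
        ENNReal.ofReal_prod_of_nonneg (fun (s : Fin n) _ => hWnn (s : ℕ))]
    rw [hμE, htsum, ENNReal.toReal_ofReal (Finset.prod_nonneg fun s _ => hWnn s)]
  · rw [if_neg hf0]
    have : ∀ d : Fin n → ℕ, μ i (C d) = 0 := by
      intro d
      rw [hCmeas d, if_neg hf0, ENNReal.ofReal_zero]
    rw [hμE, tsum_congr this, tsum_zero, ENNReal.toReal_zero]
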